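/- arXiv:1304.8033 — 4 statements merged into one kernel-verified Lean document; each statement's English description precedes it below -/
import Mathlib

section
/- If β₁, …, β_q are positive roots forming an antichain in the root poset of a crystallographic root system, then β₁, …, β_q are linearly independent. -/
/-!
If two distinct roots have positive inner product, one of the two Cartan integers between them
is `1`, so their difference is a root; for positive roots this makes them comparable. Hence an
antichain consists of pairwise obtuse vectors, all lying in the open half-space where the
height functional is positive, and such families are linearly independent (Serre, *Complex
semisimple Lie algebras*, Ch. V, §9, Lemma 4).
-/

open Finset Submodule
open scoped Classical

/-- A (reduced) crystallographic root system in the Euclidean space `ℝⁿ`,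
together with a chosen simple system `Δ` and the corresponding positive
roots `Pos`, and the (nonnegative integer) coordinates `coeff β a` of a
positive root `β` with respect to the simple roots. -/
structure CRS (n : ℕ) where
  Φ : Finset (EuclideanSpace ℝ (Fin n))
  Δ : Finset (EuclideanSpace ℝ (Fin n))
  Pos : Finset (EuclideanSpace ℝ (Fin n))
  coeff : EuclideanSpace ℝ (Fin n) → EuclideanSpace ℝ (Fin n) → ℕ
  zero_notmem : (0 : EuclideanSpace ℝ (Fin n)) ∉ Φ
  span_top : Submodule.span ℝ (Φ : Set (EuclideanSpace ℝ (Fin n))) = ⊤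
  Δ_sub : Δ ⊆ Pos
  Pos_sub : Pos ⊆ Φ
  neg_mem : ∀ α ∈ Φ, -α ∈ Φ
  pos_or_neg : ∀ α ∈ Φ, α ∈ Pos ∨ -α ∈ Pos
  not_pos_and_neg : ∀ α ∈ Pos, -α ∉ Pos
  reduced : ∀ α ∈ Φ, ∀ c : ℝ, c • α ∈ Φ → c = 1 ∨ c = -1
  reflect_mem : ∀ α ∈ Φ, ∀ β ∈ Φ,
    β - ((2 * inner ℝ α β / inner ℝ α α : ℝ)) • α ∈ Φ
  cartan_int : ∀ α ∈ Φ, ∀ β ∈ Φ, ∃ z : ℤ, (2 * inner ℝ α β / inner ℝ α α : ℝ) = z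
  Δ_indep : LinearIndependent ℝ (fun a : Δ => (a : EuclideanSpace ℝ (Fin n)))
  pos_eq_sum : ∀ β ∈ Pos, β = ∑ a ∈ Δ, (coeff β a : ℝ) • a

namespace CRS

variable {n : ℕ}

/-- The height of a positive root: the sum of its coordinates over `Δ`. -/
def ht (R : CRS n) (β : EuclideanSpace ℝ (Fin n)) : ℕ := ∑ a ∈ R.Δ, R.coeff β a

/-- The root order: `rle β α` means `β ≤ α`, i.e. `α - β` is a nonnegative
integer combination of the simple roots. -/
def rle (R : CRS n) (β α : EuclideanSpace ℝ (Fin n)) : Prop :=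
  ∃ c : EuclideanSpace ℝ (Fin n) → ℕ, α - β = ∑ a ∈ R.Δ, (c a : ℝ) • a

/-- An ideal of the positive root poset: a downward closed set of positive roots. -/
def IsIdeal (R : CRS n) (I : Finset (EuclideanSpace ℝ (Fin n))) : Prop :=
  I ⊆ R.Pos ∧ ∀ α ∈ I, ∀ β ∈ R.Pos, R.rle β α → β ∈ I

/-- Irreducibility: the simple system cannot be split into two nonempty
mutually orthogonal parts. -/
def Irred (R : CRS n) : Prop :=
  ∀ s t : Finset (EuclideanSpace ℝ (Fin n)), s ∪ t = R.Δ → Disjoint s t →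
    (∀ a ∈ s, ∀ b ∈ t, (inner ℝ a b : ℝ) = 0) → s = ∅ ∨ t = ∅

/-- The positive roots of the localized root system `Φ_X = Φ ∩ X^⊥`. -/
noncomputable def PosIn (R : CRS n) (X : Submodule ℝ (EuclideanSpace ℝ (Fin n))) :
    Finset (EuclideanSpace ℝ (Fin n)) :=
  R.Pos.filter (fun β => β ∈ Xᗮ)

end CRS

/-- The hyperplane orthogonal to a root `β`. -/
noncomputable def H {n : ℕ} (β : EuclideanSpace ℝ (Fin n)) : Submodule ℝ (EuclideanSpace ℝ (Fin n)) :=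
  (ℝ ∙ β)ᗮ

/-- The simple system (the indecomposable elements) of a positive system `P`. -/
noncomputable def simpleOf {n : ℕ} (P : Finset (EuclideanSpace ℝ (Fin n))) :
    Finset (EuclideanSpace ℝ (Fin n)) :=
  P.filter (fun γ => ¬ ∃ β₁ ∈ P, ∃ β₂ ∈ P, γ = β₁ + β₂)

namespace CRS

variable {n : ℕ} (R : CRS n)

local notation "E" => EuclideanSpace ℝ (Fin n)

lemma ne_zero_of_mem {α : E} (hα : α ∈ R.Φ) : α ≠ 0 :=
  fun h => R.zero_notmem (h ▸ hα)

lemma inner_lt_norm_mul_norm {α β : E} (hα : α ∈ R.Φ) (hβ : β ∈ R.Φ) (hne : α ≠ β) :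
    inner ℝ α β < ‖α‖ * ‖β‖ := by
  refine (real_inner_le_norm α β).lt_of_ne fun h => hne ?_
  have hβα : (‖β‖ / ‖α‖) • α = β :=
    (inner_eq_norm_mul_iff_div (𝕜 := ℝ) (R.ne_zero_of_mem hα)).1 h
  rcases R.reduced α hα _ (by rwa [hβα]) with h1 | h1
  · rw [← hβα, h1, one_smul]
  · have : 0 ≤ ‖β‖ / ‖α‖ := by positivity
    linarith

/-- Both Cartan integers `⟨β, α^∨⟩` and `⟨α, β^∨⟩` are positive with product `< 4`, so one of them
is `1`, and the corresponding reflection yields `±(α - β)`. -/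
lemma sub_mem_of_inner_pos {α β : E} (hα : α ∈ R.Φ) (hβ : β ∈ R.Φ) (hne : α ≠ β)
    (hpos : 0 < inner ℝ α β) : α - β ∈ R.Φ := by
  obtain ⟨p, hp⟩ := R.cartan_int α hα β hβ
  obtain ⟨q, hq⟩ := R.cartan_int β hβ α hα
  rw [real_inner_comm α β] at hq
  have hαα : 0 < inner ℝ α α := real_inner_self_pos.2 (R.ne_zero_of_mem hα)
  have hββ : 0 < inner ℝ β β := real_inner_self_pos.2 (R.ne_zero_of_mem hβ)
  have hp_pos : 0 < p := by
    have : (0 : ℝ) < p := hp ▸ by positivity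
    exact_mod_cast this
  have hq_pos : 0 < q := by
    have : (0 : ℝ) < q := hq ▸ by positivity
    exact_mod_cast this
  have hpq : p * q < 4 := by
    have hcs := R.inner_lt_norm_mul_norm hα hβ hne
    have : (p * q : ℝ) < 4 := by
      rw [← hp, ← hq, div_mul_div_comm, div_lt_iff₀ (by positivity),
        real_inner_self_eq_norm_sq, real_inner_self_eq_norm_sq]
      nlinarith
    exact_mod_cast this
  obtain hp1 | hq1 : p = 1 ∨ q = 1 := by
    by_contra! h
    nlinarith [show 2 ≤ p by omega, show 2 ≤ q by omega]
  · have h := R.neg_mem _ (R.reflect_mem α hα β hβ)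
    rwa [hp, hp1, Int.cast_one, one_smul, neg_sub] at h
  · have h := R.reflect_mem β hβ α hα
    rwa [real_inner_comm α β, hq, hq1, Int.cast_one, one_smul] at h

lemma rle_of_sub_mem_pos {α β : E} (h : α - β ∈ R.Pos) : R.rle β α :=
  ⟨R.coeff (α - β), R.pos_eq_sum _ h⟩

lemma inner_nonpos_of_antichain {B : Finset E} (hB : B ⊆ R.Pos)
    (hanti : ∀ α ∈ B, ∀ β ∈ B, α ≠ β → ¬ R.rle β α)
    {α β : E} (hα : α ∈ B) (hβ : β ∈ B) (hne : α ≠ β) : inner ℝ α β ≤ 0 := by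
  by_contra! hpos
  rcases R.pos_or_neg _ (R.sub_mem_of_inner_pos (R.Pos_sub (hB hα)) (R.Pos_sub (hB hβ)) hne hpos)
    with h | h
  · exact hanti α hα β hβ hne (R.rle_of_sub_mem_pos h)
  · rw [neg_sub] at h
    exact hanti β hβ α hα hne.symm (R.rle_of_sub_mem_pos h)

lemma ht_pos {β : E} (hβ : β ∈ R.Pos) : 0 < R.ht β := by
  refine Nat.pos_of_ne_zero fun h => R.ne_zero_of_mem (R.Pos_sub hβ) ?_
  rw [R.pos_eq_sum β hβ]
  refine Finset.sum_eq_zero fun a ha => ?_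
  rw [Finset.sum_eq_zero_iff.mp h a ha, Nat.cast_zero, zero_smul]

lemma exists_dual_apply_eq_ht : ∃ f : Module.Dual ℝ E, ∀ β ∈ R.Pos, f β = R.ht β := by
  let b := Module.Basis.span R.Δ_indep
  obtain ⟨f, hf⟩ := LinearMap.exists_extend b.sumCoords
  have hΔ : ∀ a (ha : a ∈ R.Δ), f a = 1 := fun a ha => by
    have h := congr($hf (b ⟨a, ha⟩))
    rwa [LinearMap.comp_apply, b.sumCoords_self_apply, Submodule.subtype_apply,
      Module.Basis.span_apply] at h
  refine ⟨f, fun β hβ => ?_⟩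
  conv_lhs => rw [R.pos_eq_sum β hβ]
  rw [map_sum, ht, Nat.cast_sum]
  refine Finset.sum_congr rfl fun a ha => ?_
  rw [map_smul, hΔ a ha, smul_eq_mul, mul_one]

end CRS

/-- an antichain of positive roots is linearly independent. -/
theorem antichain_linearIndependent {n : ℕ} (R : CRS n)
    (B : Finset (EuclideanSpace ℝ (Fin n))) (hB : B ⊆ R.Pos)
    (hanti : ∀ α ∈ B, ∀ β ∈ B, α ≠ β → ¬ R.rle β α) :
    LinearIndependent ℝ (fun b : B => (b : EuclideanSpace ℝ (Fin n))) := by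
  obtain ⟨f, hf⟩ := R.exists_dual_apply_eq_ht
  refine LinearMap.BilinForm.linearIndependent_of_pairwise_le_zero (innerₗ _)
    (fun x hx => real_inner_self_pos.2 hx) f _ (fun b => ?_) (fun b c hbc => ?_)
  · rw [hf b (hB b.2)]
    exact_mod_cast R.ht_pos (hB b.2)
  · exact R.inner_nonpos_of_antichain hB hanti b.2 c.2 (Subtype.coe_ne_coe.mpr hbc)
end

section
/- Let Φ be an irreducible simply-laced crystallographic root system and α a positive root. Then ht(α) − 1 equals the number of unordered pairs {β₁, β₂} of distinct positive roots with α = β₁ + β₂. -/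
open Finset Submodule
open scoped Classical

/-- The condition that `s` is an unordered pair `{β₁, β₂}` of distinct vectors
with `α = β₁ + β₂`. -/
def pairSumCond {n : ℕ} (α : EuclideanSpace ℝ (Fin n))
    (s : Finset (EuclideanSpace ℝ (Fin n))) : Prop :=
  ∃ β₁ β₂ : EuclideanSpace ℝ (Fin n), β₁ ≠ β₂ ∧ s = {β₁, β₂} ∧ α = β₁ + β₂

/-! By induction on the height. A positive root `α` that is not simple has `⟪a, α⟫ > 0` for
some simple root `a`; in a simply-laced system the Cartan integer `coroot a α` is then `1`, so
`s_a α = α - a` is a positive root of height one less. The simple reflection `s_a` permutes the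
positive roots other than `a`, hence maps the decompositions of `α - a` (none of which involves
`a`) bijectively onto the decompositions of `α` avoiding `a`, and the only decomposition of `α`
involving `a` is `a + (α - a)`. -/

open scoped RealInnerProductSpace

namespace CRS

variable {n : ℕ} (R : CRS n)

local notation "E" => EuclideanSpace ℝ (Fin n)

theorem ne_zero_of_mem_s7 {β : E} (hβ : β ∈ R.Φ) : β ≠ 0 :=
  fun h => R.zero_notmem (h ▸ hβ)

theorem mem_Φ_of_mem_Δ {a : E} (ha : a ∈ R.Δ) : a ∈ R.Φ :=
  R.Pos_sub (R.Δ_sub ha)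

theorem eq_of_sum_smul_eq {f g : E → ℝ}
    (h : ∑ a ∈ R.Δ, f a • a = ∑ a ∈ R.Δ, g a • a) {a : E} (ha : a ∈ R.Δ) : f a = g a := by
  refine Fintype.linearIndependent_iffₛ.mp R.Δ_indep (fun b => f b) (fun b => g b) ?_ ⟨a, ha⟩
  simpa only [sum_coe_sort R.Δ (fun b => f b • b), sum_coe_sort R.Δ (fun b => g b • b)]

theorem smul_eq_sum_ite {a : E} (ha : a ∈ R.Δ) (c : ℝ) :
    c • a = ∑ b ∈ R.Δ, (if b = a then c else 0) • b := by
  simp [ite_smul, ha]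

theorem coeff_add {β γ : E} (hβ : β ∈ R.Pos) (hγ : γ ∈ R.Pos) (hβγ : β + γ ∈ R.Pos)
    {a : E} (ha : a ∈ R.Δ) : R.coeff (β + γ) a = R.coeff β a + R.coeff γ a := by
  have h : ∑ b ∈ R.Δ, (R.coeff (β + γ) b : ℝ) • b
      = ∑ b ∈ R.Δ, ((R.coeff β b : ℝ) + R.coeff γ b) • b := by
    simp only [add_smul, sum_add_distrib, ← R.pos_eq_sum _ hβ, ← R.pos_eq_sum _ hγ,
      ← R.pos_eq_sum _ hβγ]
  exact_mod_cast R.eq_of_sum_smul_eq h ha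

theorem ht_add {β γ : E} (hβ : β ∈ R.Pos) (hγ : γ ∈ R.Pos) (hβγ : β + γ ∈ R.Pos) :
    R.ht (β + γ) = R.ht β + R.ht γ := by
  rw [ht, ht, ht, ← sum_add_distrib]
  exact sum_congr rfl fun a ha => R.coeff_add hβ hγ hβγ ha

theorem one_le_ht {β : E} (hβ : β ∈ R.Pos) : 1 ≤ R.ht β := by
  by_contra! h
  refine R.ne_zero_of_mem_s7 (R.Pos_sub hβ) ?_
  rw [R.pos_eq_sum β hβ]
  refine sum_eq_zero fun a ha => ?_
  rw [sum_eq_zero_iff.mp (Nat.lt_one_iff.mp h) a ha, Nat.cast_zero, zero_smul]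

theorem ht_eq_one_of_mem_Δ {a : E} (ha : a ∈ R.Δ) : R.ht a = 1 := by
  have h : ∀ b ∈ R.Δ, R.coeff a b = if b = a then 1 else 0 := fun b hb => by
    have := R.eq_of_sum_smul_eq ((R.pos_eq_sum a (R.Δ_sub ha)).symm.trans
      ((one_smul ℝ a).symm.trans (R.smul_eq_sum_ite ha 1))) hb
    split_ifs at this ⊢ <;> exact_mod_cast this
  rw [ht, sum_congr rfl h, sum_ite_eq' R.Δ a, if_pos ha]

theorem eq_of_coeff_eq_zero {β a : E} (hβ : β ∈ R.Pos) (ha : a ∈ R.Δ)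
    (h : ∀ b ∈ R.Δ, b ≠ a → R.coeff β b = 0) : β = a := by
  have hβa : β = (R.coeff β a : ℝ) • a := by
    conv_lhs => rw [R.pos_eq_sum β hβ]
    exact sum_eq_single a (fun b hb hba => by rw [h b hb hba, Nat.cast_zero, zero_smul])
      (fun h => absurd ha h)
  rcases R.reduced a (R.mem_Φ_of_mem_Δ ha) _ (hβa ▸ R.Pos_sub hβ) with h1 | h1
  · rw [hβa, h1, one_smul]
  · linarith [(R.coeff β a).cast_nonneg (α := ℝ)]

theorem sub_smul_mem_Pos {β a : E} (hβ : β ∈ R.Pos) (ha : a ∈ R.Δ) (hne : β ≠ a) {c : ℝ}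
    (hΦ : β - c • a ∈ R.Φ) : β - c • a ∈ R.Pos := by
  -- were `-(β - c • a)` positive, adding it to `β` would give `c • a`: `β` is supported on `a`
  refine (R.pos_or_neg _ hΦ).resolve_right fun hneg => hne (R.eq_of_coeff_eq_zero hβ ha ?_)
  intro b hb hba
  have hsum : ∑ b ∈ R.Δ, ((R.coeff β b : ℝ) + R.coeff (-(β - c • a)) b) • b
      = ∑ b ∈ R.Δ, (if b = a then c else 0) • b := by
    rw [← R.smul_eq_sum_ite ha]
    simp only [add_smul, sum_add_distrib, ← R.pos_eq_sum _ hβ, ← R.pos_eq_sum _ hneg]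
    abel
  have := R.eq_of_sum_smul_eq hsum hb
  rw [if_neg hba] at this
  have : R.coeff β b + R.coeff (-(β - c • a)) b = 0 := by exact_mod_cast this
  omega

theorem exists_mem_Δ_inner_pos {α : E} (hα : α ∈ R.Pos) : ∃ a ∈ R.Δ, 0 < ⟪a, α⟫ := by
  by_contra! h
  have hsum : ⟪α, α⟫ = ∑ a ∈ R.Δ, (R.coeff α a : ℝ) * ⟪a, α⟫ := by
    nth_rw 1 [R.pos_eq_sum α hα]
    simp only [sum_inner, real_inner_smul_left]
  have hle : ⟪α, α⟫ ≤ 0 := hsum ▸ sum_nonpos fun a ha =>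
    mul_nonpos_of_nonneg_of_nonpos (Nat.cast_nonneg _) (h a ha)
  exact R.ne_zero_of_mem_s7 (R.Pos_sub hα) (real_inner_self_nonpos.mp hle)

noncomputable def coroot (a : E) : Module.Dual ℝ E := (2 / ⟪a, a⟫) • innerₗ E a

theorem coroot_apply (a β : E) : coroot a β = 2 * ⟪a, β⟫ / ⟪a, a⟫ := by
  simp only [coroot, LinearMap.smul_apply, innerₗ_apply_apply, smul_eq_mul]
  ring

theorem coroot_self {a : E} (ha : a ≠ 0) : coroot a a = 2 := by
  rw [coroot_apply, mul_div_assoc, div_self (inner_self_ne_zero.mpr ha), mul_one]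

noncomputable def reflection {a : E} (ha : a ∈ R.Φ) : E ≃ₗ[ℝ] E :=
  Module.reflection (coroot_self (R.ne_zero_of_mem_s7 ha))

theorem reflection_apply {a : E} (ha : a ∈ R.Φ) (β : E) :
    R.reflection ha β = β - coroot a β • a :=
  Module.reflection_apply _ _

theorem reflection_self {a : E} (ha : a ∈ R.Φ) : R.reflection ha a = -a :=
  Module.reflection_apply_self _

theorem reflection_involutive {a : E} (ha : a ∈ R.Φ) : Function.Involutive (R.reflection ha) :=
  Module.involutive_reflection _

theorem reflection_mem {a β : E} (ha : a ∈ R.Φ) (hβ : β ∈ R.Φ) : R.reflection ha β ∈ R.Φ := by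
  rw [reflection_apply, coroot_apply]
  exact R.reflect_mem a ha β hβ

theorem reflection_mem_Pos {a β : E} (ha : a ∈ R.Δ) (hβ : β ∈ R.Pos) (hne : β ≠ a) :
    R.reflection (R.mem_Φ_of_mem_Δ ha) β ∈ R.Pos := by
  have hΦ := R.reflection_mem (R.mem_Φ_of_mem_Δ ha) (R.Pos_sub hβ)
  rw [reflection_apply] at hΦ ⊢
  exact R.sub_smul_mem_Pos hβ ha hne hΦ

noncomputable def sumPairs (α : E) : Finset (Finset E) :=
  (R.Pos.powersetCard 2).filter (pairSumCond α)

theorem subset_Pos_of_mem_sumPairs {α : E} {s : Finset E} (hs : s ∈ R.sumPairs α) :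
    s ⊆ R.Pos :=
  (mem_powersetCard.mp (mem_filter.mp hs).1).1

theorem mem_sumPairs {α : E} {s : Finset E} :
    s ∈ R.sumPairs α ↔ ∃ β ∈ R.Pos, ∃ γ ∈ R.Pos, β ≠ γ ∧ s = {β, γ} ∧ α = β + γ := by
  simp only [sumPairs, mem_filter, mem_powersetCard, pairSumCond]
  constructor
  · rintro ⟨⟨hsub, -⟩, β, γ, hne, rfl, rfl⟩
    exact ⟨β, hsub (mem_insert_self _ _), γ, hsub (mem_insert_of_mem (mem_singleton_self _)),
      hne, rfl, rfl⟩
  · rintro ⟨β, hβ, γ, hγ, hne, rfl, rfl⟩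
    exact ⟨⟨insert_subset hβ (singleton_subset_iff.mpr hγ), card_pair hne⟩, β, γ, hne, rfl, rfl⟩

theorem sumPairs_eq_empty_of_mem_Δ {a : E} (ha : a ∈ R.Δ) : R.sumPairs a = ∅ := by
  refine eq_empty_of_forall_notMem fun s hs => ?_
  obtain ⟨β, hβ, γ, hγ, -, -, hsum⟩ := R.mem_sumPairs.mp hs
  have := R.ht_add hβ hγ (hsum ▸ R.Δ_sub ha)
  rw [← hsum, R.ht_eq_one_of_mem_Δ ha] at this
  linarith [R.one_le_ht hβ, R.one_le_ht hγ]

theorem eq_pair_of_mem_sumPairs {α a : E} {s : Finset E} (hs : s ∈ R.sumPairs α) (has : a ∈ s) :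
    s = {a, α - a} := by
  obtain ⟨β, -, γ, -, -, rfl, rfl⟩ := R.mem_sumPairs.mp hs
  rcases mem_insert.mp has with rfl | h
  · rw [add_sub_cancel_left]
  · rw [mem_singleton.mp h, add_sub_cancel_right, pair_comm]

theorem image_reflection_mem_sumPairs {x a : E} {s : Finset E} (ha : a ∈ R.Δ)
    (hs : s ∈ R.sumPairs x) (has : a ∉ s) :
    s.image (R.reflection (R.mem_Φ_of_mem_Δ ha))
      ∈ R.sumPairs (R.reflection (R.mem_Φ_of_mem_Δ ha) x) := by
  obtain ⟨β, hβ, γ, hγ, hne, rfl, rfl⟩ := R.mem_sumPairs.mp hs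
  rw [image_insert, image_singleton, map_add]
  refine R.mem_sumPairs.mpr ⟨_, R.reflection_mem_Pos ha hβ ?_, _, R.reflection_mem_Pos ha hγ ?_,
    (R.reflection_involutive _).injective.ne hne, rfl, rfl⟩
  · rintro rfl
    exact has (mem_insert_self _ _)
  · rintro rfl
    exact has (mem_insert_of_mem (mem_singleton_self _))

def SimplyLaced : Prop := ∀ α ∈ R.Φ, ∀ β ∈ R.Φ, ‖α‖ = ‖β‖

section SimplyLaced

variable {R}

theorem abs_coroot_le_two (hsl : R.SimplyLaced) {a β : E} (ha : a ∈ R.Φ) (hβ : β ∈ R.Φ) :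
    |coroot a β| ≤ 2 := by
  have hpos : 0 < ⟪a, a⟫ := real_inner_self_pos.mpr (R.ne_zero_of_mem_s7 ha)
  have hcs : |⟪a, β⟫| ≤ ⟪a, a⟫ := by
    calc |⟪a, β⟫| ≤ ‖a‖ * ‖β‖ := abs_real_inner_le_norm a β
      _ = ⟪a, a⟫ := by rw [hsl β hβ a ha, real_inner_self_eq_norm_mul_norm]
  rw [coroot_apply, abs_div, abs_of_pos hpos, div_le_iff₀ hpos, abs_mul, abs_two]
  linarith

theorem eq_of_coroot_eq_two (hsl : R.SimplyLaced) {a β : E} (ha : a ∈ R.Φ) (hβ : β ∈ R.Φ)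
    (h : coroot a β = 2) : β = a := by
  have hpos : 0 < ⟪a, a⟫ := real_inner_self_pos.mpr (R.ne_zero_of_mem_s7 ha)
  have hab : ⟪a, β⟫ = ⟪a, a⟫ := by
    rw [coroot_apply, div_eq_iff hpos.ne'] at h
    linarith
  have hbb : ⟪β, β⟫ = ⟪a, a⟫ := by
    rw [real_inner_self_eq_norm_sq, real_inner_self_eq_norm_sq, hsl β hβ a ha]
  rw [← sub_eq_zero, ← inner_self_eq_zero (𝕜 := ℝ), inner_sub_sub_self, real_inner_comm a β]
  linarith

theorem coroot_eq_one (hsl : R.SimplyLaced) {a β : E} (ha : a ∈ R.Φ) (hβ : β ∈ R.Φ)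
    (hpos : 0 < ⟪a, β⟫) (hne : β ≠ a) : coroot a β = 1 := by
  obtain ⟨z, hz⟩ := R.cartan_int a ha β hβ
  rw [← coroot_apply] at hz
  have hz0 : 0 < z := by
    have : (0 : ℝ) < z := by
      rw [← hz, coroot_apply]
      exact div_pos (by linarith) (real_inner_self_pos.mpr (R.ne_zero_of_mem_s7 ha))
    exact_mod_cast this
  have hz2 : z ≤ 2 := by
    have := (abs_le.mp (abs_coroot_le_two hsl ha hβ)).2
    rw [hz] at this
    exact_mod_cast this
  have hz2' : z ≠ 2 := fun h => hne (eq_of_coroot_eq_two hsl ha hβ (by rw [hz, h]; norm_num))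
  rw [hz, show z = 1 by omega, Int.cast_one]

theorem reflection_eq_sub (hsl : R.SimplyLaced) {α a : E} (hα : α ∈ R.Φ) (ha : a ∈ R.Φ)
    (hpos : 0 < ⟪a, α⟫) (hne : α ≠ a) : R.reflection ha α = α - a := by
  rw [reflection_apply, coroot_eq_one hsl ha hα hpos hne, one_smul]

theorem sub_mem_Pos (hsl : R.SimplyLaced) {α a : E} (hα : α ∈ R.Pos) (ha : a ∈ R.Δ)
    (hpos : 0 < ⟪a, α⟫) (hne : α ≠ a) : α - a ∈ R.Pos := by
  rw [← reflection_eq_sub hsl (R.Pos_sub hα) (R.mem_Φ_of_mem_Δ ha) hpos hne]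
  exact R.reflection_mem_Pos ha hα hne

/-- `a + (α - 2a)` cannot be a decomposition, since `coroot a (α - 2a) = -3`. -/
theorem notMem_of_mem_sumPairs_sub (hsl : R.SimplyLaced) {α a : E} {s : Finset E}
    (ha : a ∈ R.Φ) (hα : coroot a α = 1) (hs : s ∈ R.sumPairs (α - a)) : a ∉ s := by
  intro has
  have hmem : α - a - a ∈ R.Φ := R.Pos_sub (R.subset_Pos_of_mem_sumPairs hs
    (R.eq_pair_of_mem_sumPairs hs has ▸ mem_insert_of_mem (mem_singleton_self _)))
  have := abs_coroot_le_two hsl ha hmem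
  rw [map_sub, map_sub, hα, coroot_self (R.ne_zero_of_mem_s7 ha)] at this
  norm_num at this

theorem card_sumPairs_eq_card_sumPairs_sub_add_one (hsl : R.SimplyLaced) {α a : E}
    (hα : α ∈ R.Pos) (ha : a ∈ R.Δ) (hpos : 0 < ⟪a, α⟫) (hne : α ≠ a) :
    (R.sumPairs α).card = (R.sumPairs (α - a)).card + 1 := by
  have haΦ := R.mem_Φ_of_mem_Δ ha
  set σ := R.reflection haΦ
  have hc : coroot a α = 1 := coroot_eq_one hsl haΦ (R.Pos_sub hα) hpos hne
  have hσα : σ α = α - a := reflection_eq_sub hsl (R.Pos_sub hα) haΦ hpos hne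
  have hσα' : σ (α - a) = α := by rw [← hσα, R.reflection_involutive]
  have hσσ : ∀ s : Finset E, (s.image σ).image σ = s := fun s => by
    rw [image_image, (R.reflection_involutive haΦ).comp_self, image_id]
  have hpair : {a, α - a} ∈ R.sumPairs α := by
    refine R.mem_sumPairs.mpr ⟨a, R.Δ_sub ha, α - a, sub_mem_Pos hsl hα ha hpos hne, fun h => ?_,
      rfl, by abel⟩
    have := congrArg (coroot a) h
    rw [map_sub, hc, coroot_self (R.ne_zero_of_mem_s7 haΦ)] at this
    norm_num at this
  have hcontaining : (R.sumPairs α).filter (a ∈ ·) = {{a, α - a}} := by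
    ext s
    simp only [mem_filter, mem_singleton]
    exact ⟨fun h => R.eq_pair_of_mem_sumPairs h.1 h.2,
      by rintro rfl; exact ⟨hpair, mem_insert_self _ _⟩⟩
  have havoiding : ((R.sumPairs α).filter (a ∉ ·)).card = (R.sumPairs (α - a)).card := by
    refine card_nbij' (image σ) (image σ) (fun s hs => ?_) (fun t ht => ?_)
      (fun s _ => hσσ s) (fun t _ => hσσ t)
    · rw [coe_filter] at hs
      rw [mem_coe, ← hσα]
      exact R.image_reflection_mem_sumPairs ha hs.1 hs.2
    · rw [mem_coe] at ht
      refine mem_filter.mpr ⟨hσα' ▸ R.image_reflection_mem_sumPairs ha ht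
        (notMem_of_mem_sumPairs_sub hsl haΦ hc ht), fun h => ?_⟩
      obtain ⟨δ, hδ, hδa⟩ := mem_image.mp h
      have hδ' : δ = -a := by rw [← R.reflection_involutive haΦ δ, hδa, R.reflection_self]
      exact R.not_pos_and_neg a (R.Δ_sub ha) (hδ' ▸ R.subset_Pos_of_mem_sumPairs ht hδ)
  rw [← card_filter_add_card_filter_not (s := R.sumPairs α) (a ∈ ·), hcontaining, havoiding,
    card_singleton, add_comm]

end SimplyLaced

end CRS

theorem height_sub_one_eq_card_sum_pairs_general {n : ℕ} (R : CRS n)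
    (hsl : ∀ α ∈ R.Φ, ∀ β ∈ R.Φ, ‖α‖ = ‖β‖)
    (α : EuclideanSpace ℝ (Fin n)) (hα : α ∈ R.Pos) :
    R.ht α - 1 = ((R.Pos.powersetCard 2).filter (pairSumCond α)).card := by
  change R.ht α - 1 = (R.sumPairs α).card
  induction hk : R.ht α using Nat.strong_induction_on generalizing α with
  | _ k ih =>
  by_cases hΔ : α ∈ R.Δ
  · rw [← hk, R.ht_eq_one_of_mem_Δ hΔ, R.sumPairs_eq_empty_of_mem_Δ hΔ, card_empty]
  obtain ⟨a, ha, hpos⟩ := R.exists_mem_Δ_inner_pos hα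
  have hne : α ≠ a := by rintro rfl; exact hΔ ha
  have hsub : α - a ∈ R.Pos := CRS.sub_mem_Pos hsl hα ha hpos hne
  have hht : R.ht α = R.ht (α - a) + 1 := by
    rw [← R.ht_eq_one_of_mem_Δ ha, ← R.ht_add hsub (R.Δ_sub ha) (by rwa [sub_add_cancel]),
      sub_add_cancel]
  rw [CRS.card_sumPairs_eq_card_sumPairs_sub_add_one hsl hα ha hpos hne,
    ← ih _ (by omega) _ hsub rfl]
  have := R.one_le_ht hsub
  omega

/-- in a simply-laced irreducible root system, `ht(α) - 1` equals
the number of unordered pairs `{β₁, β₂}` of distinct positive roots with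
`α = β₁ + β₂`. -/
theorem height_sub_one_eq_card_sum_pairs {n : ℕ} (R : CRS n) (hirr : R.Irred)
    (hsl : ∀ α ∈ R.Φ, ∀ β ∈ R.Φ, ‖α‖ = ‖β‖)
    (α : EuclideanSpace ℝ (Fin n)) (hα : α ∈ R.Pos) :
    R.ht α - 1 = ((R.Pos.powersetCard 2).filter (pairSumCond α)).card :=
  height_sub_one_eq_card_sum_pairs_general R hsl α hα
end

section
/- Let Φ be a crystallographic root system of rank 2 (of type A₂, B₂, G₂, or the reducible type A₁×A₁) and let α be a positive root. Then ht(α) − 1 equals the number of unordered pairs {β₁, β₂} of distinct positive roots with α ∈ ℤ>0·β₁ + ℤ>0·β₂. -/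
open Finset Submodule
open scoped Classical

/-- The condition that `s` is an unordered pair `{β₁, β₂}` of distinct vectors
with `α ∈ ℤ_{>0}·β₁ + ℤ_{>0}·β₂`. -/
def pairCond {n : ℕ} (α : EuclideanSpace ℝ (Fin n))
    (s : Finset (EuclideanSpace ℝ (Fin n))) : Prop :=
  ∃ β₁ β₂ : EuclideanSpace ℝ (Fin n), β₁ ≠ β₂ ∧ s = {β₁, β₂} ∧
    ∃ a b : ℕ, 0 < a ∧ 0 < b ∧ α = (a : ℝ) • β₁ + (b : ℝ) • β₂

open scoped RealInnerProductSpace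
lemma cs_strict {n : ℕ} (x y : EuclideanSpace ℝ (Fin n)) (hy : y ≠ 0)
    (hpar : ∀ c : ℝ, x ≠ c • y) : ⟪x,y⟫^2 < ⟪x,x⟫ * ⟪y,y⟫ := by
  have hny : (0:ℝ) < ‖y‖ := norm_pos_iff.2 hy
  have h1 : ⟪x,y⟫ < ‖x‖ * ‖y‖ := by
    refine inner_lt_norm_mul_iff_real.2 fun h => ?_
    have h2 := congrArg (fun v => (‖y‖)⁻¹ • v) h
    simp only [smul_smul, inv_mul_cancel₀ hny.ne', one_smul] at h2
    exact hpar _ h2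
  have h2 : ⟪-x,y⟫ < ‖(-x)‖ * ‖y‖ := by
    refine inner_lt_norm_mul_iff_real.2 fun h => ?_
    have h2 := congrArg (fun v => -((‖y‖)⁻¹ • v)) h
    simp only [smul_smul, smul_neg, inv_mul_cancel₀ hny.ne', one_smul, neg_neg] at h2
    rw [← neg_smul] at h2
    exact hpar _ h2
  rw [inner_neg_left, norm_neg] at h2
  have habs : |⟪x,y⟫| < ‖x‖ * ‖y‖ := abs_lt.2 ⟨by linarith, h1⟩
  have h3 : ⟪x,y⟫^2 < (‖x‖ * ‖y‖)^2 := by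
    have := mul_self_lt_mul_self (abs_nonneg _) habs
    rw [abs_mul_abs_self] at this
    nlinarith [this]
  calc ⟪x,y⟫^2 < (‖x‖ * ‖y‖)^2 := h3
  _ = ⟪x,x⟫ * ⟪y,y⟫ := by
      rw [real_inner_self_eq_norm_mul_norm, real_inner_self_eq_norm_mul_norm]; ring

open scoped RealInnerProductSpace

namespace Aux
variable {n : ℕ}

lemma inner_self_pos' (R : CRS n) {v : EuclideanSpace ℝ (Fin n)} (hv : v ∈ R.Φ) : 0 < ⟪v,v⟫ :=
  lt_of_le_of_ne real_inner_self_nonneg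
    (Ne.symm (inner_self_ne_zero.2 (fun h => R.zero_notmem (h ▸ hv))))

section Basic
variable (R : CRS n) {a b : EuclideanSpace ℝ (Fin n)} (hab : a ≠ b) (hΔ : R.Δ = {a, b})

include hab hΔ

lemma haΔ : a ∈ R.Δ := by rw [hΔ]; exact mem_insert_self _ _
lemma hbΔ : b ∈ R.Δ := by rw [hΔ]; exact mem_insert_of_mem (mem_singleton_self _)

lemma uniq0 : ∀ x y : ℝ, x • a + y • b = 0 → x = 0 ∧ y = 0 := by
  intro x y h
  have hi := R.Δ_indep
  rw [Fintype.linearIndependent_iff] at hi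
  have hsum : ∑ i : R.Δ, (fun c : EuclideanSpace ℝ (Fin n) => if c = a then x else y) (i : EuclideanSpace ℝ (Fin n)) • (i : EuclideanSpace ℝ (Fin n))
      = x • a + y • b := by
    rw [Finset.sum_coe_sort R.Δ (fun c => (if c = a then x else y) • c)]
    rw [hΔ, Finset.sum_pair hab]
    simp [hab.symm]
  have := hi (fun i => (fun c : EuclideanSpace ℝ (Fin n) => if c = a then x else y) (i : EuclideanSpace ℝ (Fin n))) (by rw [hsum, h])
  constructor
  · have := this ⟨a, haΔ R hab hΔ⟩; simpa using this
  · have := this ⟨b, hbΔ R hab hΔ⟩; simpa [hab.symm] using this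

lemma uniq {x y x' y' : ℝ} (h : x • a + y • b = x' • a + y' • b) : x = x' ∧ y = y' := by
  have h0 : (x - x') • a + (y - y') • b = 0 := by
    rw [sub_smul, sub_smul]; rw [← sub_eq_zero] at h; rw [← h]; abel
  have := uniq0 R hab hΔ _ _ h0
  constructor <;> linarith [this.1, this.2]

lemma coords {β : EuclideanSpace ℝ (Fin n)} (hβ : β ∈ R.Pos) :
    β = (R.coeff β a : ℝ) • a + (R.coeff β b : ℝ) • b := by
  have := R.pos_eq_sum β hβ
  rwa [hΔ, Finset.sum_pair hab] at this

lemma ht_eq {β : EuclideanSpace ℝ (Fin n)} (hβ : β ∈ R.Pos) :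
    R.ht β = R.coeff β a + R.coeff β b := by
  rw [CRS.ht, hΔ, Finset.sum_pair hab]

lemma coeff_spec {β : EuclideanSpace ℝ (Fin n)} (hβ : β ∈ R.Pos) {x y : ℕ}
    (h : β = (x : ℝ) • a + (y : ℝ) • b) : R.coeff β a = x ∧ R.coeff β b = y := by
  have h2 := coords R hab hΔ hβ
  have := uniq R hab hΔ (h2.symm.trans h)
  exact ⟨Nat.cast_injective this.1, Nat.cast_injective this.2⟩

lemma mem_pos_of {v : EuclideanSpace ℝ (Fin n)} (hv : v ∈ R.Φ) {x y : ℕ}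
    (h : v = (x : ℝ) • a + (y : ℝ) • b) : v ∈ R.Pos := by
  rcases R.pos_or_neg v hv with h1 | h1
  · exact h1
  · exfalso
    have h2 := coords R hab hΔ h1
    have h3 : -v = (-(x:ℝ)) • a + (-(y:ℝ)) • b := by rw [h]; module
    have h4 := uniq R hab hΔ (h2.symm.trans h3)
    have e1 : (R.coeff (-v) a : ℝ) = -(x:ℝ) := h4.1
    have e2 : (R.coeff (-v) b : ℝ) = -(y:ℝ) := h4.2
    have hx : (x:ℝ) = 0 := by
      have h5 : (0:ℝ) ≤ (R.coeff (-v) a : ℝ) := Nat.cast_nonneg _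
      have h6 : (0:ℝ) ≤ (x:ℝ) := Nat.cast_nonneg _
      linarith
    have hy : (y:ℝ) = 0 := by
      have h5 : (0:ℝ) ≤ (R.coeff (-v) b : ℝ) := Nat.cast_nonneg _
      have h6 : (0:ℝ) ≤ (y:ℝ) := Nat.cast_nonneg _
      linarith
    have hv0 : v = 0 := by rw [h, hx, hy]; simp
    exact R.zero_notmem (hv0 ▸ hv)

end Basic
end Aux

namespace Aux
variable {n : ℕ}
section Two
set_option linter.unusedSectionVars false
variable (R : CRS n) {a b : EuclideanSpace ℝ (Fin n)} (hab : a ≠ b) (hΔ : R.Δ = {a, b})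
include hab hΔ

lemma haP : a ∈ R.Pos := R.Δ_sub (haΔ R hab hΔ)
lemma hbP : b ∈ R.Pos := R.Δ_sub (hbΔ R hab hΔ)

-- a general "mixed sign combination is not in Φ" lemma
lemma mixed_not_mem {x y : ℝ} (hx : 0 < x) (hy : y < 0) :
    x • a + y • b ∉ R.Φ := by
  intro hv
  rcases R.pos_or_neg _ hv with h1 | h1
  · have h2 := coords R hab hΔ h1
    have h4 := uniq R hab hΔ (h2.symm.trans rfl)
    have : (0:ℝ) ≤ y := h4.2 ▸ Nat.cast_nonneg _
    linarith
  · have h2 := coords R hab hΔ h1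
    have h3 : -(x • a + y • b) = (-x) • a + (-y) • b := by module
    have h4 := uniq R hab hΔ (h2.symm.trans h3)
    have : (0:ℝ) ≤ -x := h4.1 ▸ Nat.cast_nonneg _
    linarith

lemma sub_ab_not : a - b ∉ R.Φ := by
  have := mixed_not_mem R hab hΔ (x := 1) (y := -1) one_pos (by norm_num)
  intro h; apply this
  have : a - b = (1:ℝ) • a + (-1:ℝ) • b := by module
  rwa [← this]

lemma sub_ba_not : b - a ∉ R.Φ := by
  intro h
  apply sub_ab_not R hab hΔ
  have := R.neg_mem _ h
  rwa [neg_sub] at this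

end Two

-- the string lemma
lemma string (R : CRS n) {γ δ : EuclideanSpace ℝ (Fin n)} (hγ : γ ∈ R.Φ) (hδ : δ ∈ R.Φ)
    (hpar : ∀ c : ℝ, δ ≠ c • γ) (hpos : 0 < ⟪γ,δ⟫) : δ - γ ∈ R.Φ := by
  have hγγ := inner_self_pos' R hγ
  have hδδ := inner_self_pos' R hδ
  obtain ⟨z₁, hz₁⟩ := R.cartan_int γ hγ δ hδ
  obtain ⟨z₂, hz₂⟩ := R.cartan_int δ hδ γ hγ
  have hcs : ⟪δ,γ⟫^2 < ⟪δ,δ⟫ * ⟪γ,γ⟫ :=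
    cs_strict δ γ (fun h => R.zero_notmem (h ▸ hγ)) hpar
  have hsym : ⟪δ,γ⟫ = ⟪γ,δ⟫ := real_inner_comm _ _
  have hz₁pos : (0:ℝ) < z₁ := by
    rw [← hz₁]; positivity
  have hz₂pos : (0:ℝ) < z₂ := by
    rw [← hz₂, hsym]; positivity
  have hprod : (z₁:ℝ) * z₂ < 4 := by
    rw [← hz₁, ← hz₂, hsym]
    rw [div_mul_div_comm]
    rw [div_lt_iff₀ (by positivity)]
    nlinarith [hcs, hsym]
  have h1 : (1:ℤ) ≤ z₁ := by have : (0:ℤ) < z₁ := by exact_mod_cast hz₁pos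
                             omega
  have h2 : (1:ℤ) ≤ z₂ := by have : (0:ℤ) < z₂ := by exact_mod_cast hz₂pos
                             omega
  have h4 : z₁ * z₂ ≤ 3 := by
    have : (z₁ * z₂ : ℤ) < 4 := by exact_mod_cast (by push_cast; exact hprod : ((z₁ * z₂ : ℤ):ℝ) < 4)
    omega
  have hone : z₁ = 1 ∨ z₂ = 1 := by
    by_contra hcon
    push_neg at hcon
    have : 2 ≤ z₁ := by omega
    have : 2 ≤ z₂ := by omega
    nlinarith [h4]
  rcases hone with h | h
  · have := R.reflect_mem γ hγ δ hδ
    rwa [hz₁, h, Int.cast_one, one_smul] at this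
  · have := R.reflect_mem δ hδ γ hγ
    rw [hz₂, h, Int.cast_one, one_smul] at this
    have := R.neg_mem _ this
    rwa [neg_sub] at this

end Aux

namespace Aux
variable {n : ℕ}
section Three
set_option linter.unusedSectionVars false
variable (R : CRS n) {a b : EuclideanSpace ℝ (Fin n)} (hab : a ≠ b) (hΔ : R.Δ = {a, b})
include hab hΔ

lemma descent_half {β : EuclideanSpace ℝ (Fin n)} (hβ : β ∈ R.Pos)
    (h2 : 2 ≤ R.coeff β a + R.coeff β b) (hip : 0 < ⟪a,β⟫) :
    ∃ γ ∈ R.Pos, R.coeff γ a + 1 = R.coeff β a ∧ R.coeff γ b = R.coeff β b := by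
  have hβΦ := R.Pos_sub hβ
  have haΦ := R.Pos_sub (haP R hab hΔ)
  set i := R.coeff β a with hi
  set j := R.coeff β b with hj
  have hco : β = (i:ℝ) • a + (j:ℝ) • b := coords R hab hΔ hβ
  have hpar : ∀ c : ℝ, β ≠ c • a := by
    intro c hc
    rcases R.reduced a haΦ c (hc ▸ hβΦ) with h | h
    · rw [h, one_smul] at hc
      have hsp := coeff_spec R hab hΔ hβ (x := 1) (y := 0)
        (by rw [hc]; push_cast; module)
      rw [← hi, ← hj] at *
      omega
    · rw [h] at hc
      have : -β = a := by rw [hc]; module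
      exact R.not_pos_and_neg β hβ (this.symm ▸ haP R hab hΔ)
  have hsub : β - a ∈ R.Φ := string R haΦ hβΦ hpar hip
  rcases R.pos_or_neg _ hsub with h1 | h1
  · refine ⟨β - a, h1, ?_⟩
    set X := R.coeff (β - a) a
    set Y := R.coeff (β - a) b
    have hco2 : β - a = (X:ℝ) • a + (Y:ℝ) • b := coords R hab hΔ h1
    have hco3 : β - a = ((i:ℝ) - 1) • a + (j:ℝ) • b := by rw [hco]; module
    have hu := uniq R hab hΔ (hco2.symm.trans hco3)
    constructor
    · have : ((X + 1 : ℕ) : ℝ) = (i:ℝ) := by push_cast; linarith [hu.1]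
      exact_mod_cast this
    · exact_mod_cast hu.2
  · exfalso
    rw [neg_sub] at h1
    set X := R.coeff (a - β) a
    set Y := R.coeff (a - β) b
    have hco2 : a - β = (X:ℝ) • a + (Y:ℝ) • b := coords R hab hΔ h1
    have hco3 : a - β = (1 - (i:ℝ)) • a + (-(j:ℝ)) • b := by rw [hco]; module
    have hu := uniq R hab hΔ (hco2.symm.trans hco3)
    have hj0 : (j:ℝ) = 0 := by
      have := hu.2
      have h5 : (0:ℝ) ≤ (Y:ℝ) := Nat.cast_nonneg _
      have h6 : (0:ℝ) ≤ (j:ℝ) := Nat.cast_nonneg _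
      linarith
    have hi1 : (i:ℝ) ≤ 1 := by
      have := hu.1
      have h5 : (0:ℝ) ≤ (X:ℝ) := Nat.cast_nonneg _
      linarith
    have : j = 0 := by exact_mod_cast hj0
    have : i ≤ 1 := by exact_mod_cast hi1
    omega

lemma descent {β : EuclideanSpace ℝ (Fin n)} (hβ : β ∈ R.Pos)
    (h2 : 2 ≤ R.coeff β a + R.coeff β b) :
    (∃ γ ∈ R.Pos, R.coeff γ a + 1 = R.coeff β a ∧ R.coeff γ b = R.coeff β b) ∨
    (∃ γ ∈ R.Pos, R.coeff γ a = R.coeff β a ∧ R.coeff γ b + 1 = R.coeff β b) := by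
  have hβΦ := R.Pos_sub hβ
  have hco : β = (R.coeff β a : ℝ) • a + (R.coeff β b : ℝ) • b := coords R hab hΔ hβ
  have hip : 0 < ⟪a,β⟫ ∨ 0 < ⟪b,β⟫ := by
    by_contra hcon
    push_neg at hcon
    have hββ := inner_self_pos' R hβΦ
    have hexp : ⟪β,β⟫ = (R.coeff β a : ℝ) * ⟪a,β⟫ + (R.coeff β b : ℝ) * ⟪b,β⟫ := by
      nth_rewrite 1 [hco]
      rw [inner_add_left, real_inner_smul_left, real_inner_smul_left]
    nlinarith [Nat.cast_nonneg (α := ℝ) (R.coeff β a), Nat.cast_nonneg (α := ℝ) (R.coeff β b),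
      hcon.1, hcon.2]
  rcases hip with h | h
  · exact Or.inl (descent_half R hab hΔ hβ h2 h)
  · right
    have hΔ' : R.Δ = {b, a} := by rw [hΔ]; exact Finset.pair_comm a b
    have := descent_half R hab.symm hΔ' hβ (by omega) h
    obtain ⟨γ, hγ, h1, h2⟩ := this
    exact ⟨γ, hγ, h2, h1⟩

end Three
end Aux

namespace Aux
variable {n : ℕ}
section Four
set_option linter.unusedSectionVars false
variable (R : CRS n) {a b : EuclideanSpace ℝ (Fin n)} (hab : a ≠ b) (hΔ : R.Δ = {a, b})
  {p q : ℕ} (hp : 2*⟪a,b⟫ = -(p:ℝ)*⟪a,a⟫) (hq : 2*⟪a,b⟫ = -(q:ℝ)*⟪b,b⟫)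
include hab hΔ hp

lemma cval_a {β : EuclideanSpace ℝ (Fin n)} {x y : ℝ} (hco : β = x • a + y • b) :
    (2 * ⟪a,β⟫ / ⟪a,a⟫ : ℝ) = 2*x - p*y := by
  have hA : (0:ℝ) < ⟪a,a⟫ := inner_self_pos' R (R.Pos_sub (haP R hab hΔ))
  have h2 : ⟪a,β⟫ = x*⟪a,a⟫ + y*⟪a,b⟫ := by
    rw [hco, inner_add_right, real_inner_smul_right, real_inner_smul_right]
  rw [h2, div_eq_iff hA.ne']
  linear_combination y * hp

lemma reflA {β : EuclideanSpace ℝ (Fin n)} (hβΦ : β ∈ R.Φ) {x y : ℝ}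
    (hco : β = x • a + y • b) : ((p:ℝ)*y - x) • a + y • b ∈ R.Φ := by
  have haΦ := R.Pos_sub (haP R hab hΔ)
  have h1 := R.reflect_mem a haΦ β hβΦ
  rw [show (2 * inner ℝ a β / inner ℝ a a : ℝ) = 2*x - p*y from cval_a R hab hΔ hp hco] at h1
  have h2 : β - (2*x - (p:ℝ)*y) • a = ((p:ℝ)*y - x) • a + y • b := by rw [hco]; module
  rwa [h2] at h1

omit hp
include hq

lemma reflB {β : EuclideanSpace ℝ (Fin n)} (hβΦ : β ∈ R.Φ) {x y : ℝ}
    (hco : β = x • a + y • b) : x • a + ((q:ℝ)*x - y) • b ∈ R.Φ := by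
  have hΔ' : R.Δ = {b, a} := by rw [hΔ]; exact Finset.pair_comm a b
  have hq' : 2*⟪b,a⟫ = -(q:ℝ)*⟪b,b⟫ := by rw [real_inner_comm]; exact hq
  have := reflA R hab.symm hΔ' hq' hβΦ (x := y) (y := x) (by rw [hco]; module)
  rw [add_comm] at this
  exact this

omit hq

lemma excl_smul {β γ : EuclideanSpace ℝ (Fin n)} (hβ : β ∈ R.Pos) (hγ : γ ∈ R.Φ)
    {c : ℝ} (hc1 : c ≠ 1) (hc2 : c ≠ -1) (h : β = c • γ) : False := by
  rcases R.reduced γ hγ c (h ▸ R.Pos_sub hβ) with h' | h' <;> [exact hc1 h'; exact hc2 h']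

include hp in
lemma excl_ba {β : EuclideanSpace ℝ (Fin n)} (hβ : β ∈ R.Pos) {x : ℝ}
    (hco : β = x • a + (1:ℝ) • b) (hx : (p:ℝ)*1 - x = -1) : False := by
  have h1 := reflA R hab hΔ hp (R.Pos_sub hβ) hco
  rw [hx] at h1
  apply sub_ba_not R hab hΔ
  have : b - a = (-1:ℝ) • a + (1:ℝ) • b := by module
  rwa [this]

include hq in
lemma excl_ab {β : EuclideanSpace ℝ (Fin n)} (hβ : β ∈ R.Pos) {y : ℝ}
    (hco : β = (1:ℝ) • a + y • b) (hy : (q:ℝ)*1 - y = -1) : False := by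
  have h1 := reflB R hab hΔ hq (R.Pos_sub hβ) hco
  rw [hy] at h1
  apply sub_ab_not R hab hΔ
  have : a - b = (1:ℝ) • a + (-1:ℝ) • b := by module
  rwa [this]

end Four
end Aux

namespace Aux
variable {n : ℕ}

def pairCondB (v : ℕ × ℕ) (s : Finset (ℕ × ℕ)) : Prop :=
  ∃ w₁ ∈ s, ∃ w₂ ∈ s, w₁ ≠ w₂ ∧ ∃ m ∈ Finset.range 6, ∃ k ∈ Finset.range 6,
    0 < m ∧ 0 < k ∧ v.1 = m * w₁.1 + k * w₂.1 ∧ v.2 = m * w₁.2 + k * w₂.2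

instance (v : ℕ × ℕ) : DecidablePred (pairCondB v) := fun s => by
  unfold pairCondB; infer_instance

lemma card_transfer {A B : Type*} [DecidableEq A] [DecidableEq B] (f : A → B)
    (P : Finset A) (hf : Set.InjOn f P) (pr : Finset A → Prop) (qr : Finset B → Prop)
    (h : ∀ s ⊆ P, s.card = 2 → (pr s ↔ qr (s.image f))) :
    ((P.powersetCard 2).filter pr).card = (((P.image f).powersetCard 2).filter qr).card := by
  classical
  apply Finset.card_bij (fun s _ => s.image f)
  · intro s hs
    rw [mem_filter, Finset.mem_powersetCard] at hs ⊢
    obtain ⟨⟨hsub, hcard⟩, hp⟩ := hs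
    refine ⟨⟨Finset.image_subset_image hsub, ?_⟩, ?_⟩
    · rw [Finset.card_image_of_injOn (hf.mono (by exact_mod_cast hsub)), hcard]
    · exact (h s hsub hcard).1 hp
  · intro s hs t ht hst
    rw [mem_filter, Finset.mem_powersetCard] at hs ht
    apply Finset.ext
    intro x
    constructor
    · intro hx
      have : f x ∈ t.image f := hst ▸ Finset.mem_image_of_mem f hx
      obtain ⟨y, hy, hxy⟩ := Finset.mem_image.1 this
      rwa [← hf (ht.1.1 hy) (hs.1.1 hx) hxy]
    · intro hx
      have : f x ∈ s.image f := hst ▸ Finset.mem_image_of_mem f hx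
      obtain ⟨y, hy, hxy⟩ := Finset.mem_image.1 this
      rwa [← hf (hs.1.1 hy) (ht.1.1 hx) hxy]
  · intro t ht
    rw [mem_filter, Finset.mem_powersetCard] at ht
    obtain ⟨⟨hsub, hcard⟩, hq⟩ := ht
    set s := P.filter (fun x => f x ∈ t) with hsdef
    have hsubP : s ⊆ P := Finset.filter_subset _ _
    have himg : s.image f = t := by
      apply Finset.Subset.antisymm
      · intro y hy
        obtain ⟨x, hx, rfl⟩ := Finset.mem_image.1 hy
        exact (Finset.mem_filter.1 hx).2
      · intro y hy
        obtain ⟨x, hx, rfl⟩ := Finset.mem_image.1 (hsub hy)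
        exact Finset.mem_image.2 ⟨x, Finset.mem_filter.2 ⟨hx, hy⟩, rfl⟩
    have hscard : s.card = 2 := by
      rw [← hcard, ← himg]
      exact (Finset.card_image_of_injOn (hf.mono (by exact_mod_cast hsubP))).symm
    refine ⟨s, Finset.mem_filter.2 ⟨Finset.mem_powersetCard.2 ⟨hsubP, hscard⟩, ?_⟩, himg⟩
    exact (h s hsubP hscard).2 (himg ▸ hq)

section Five
set_option linter.unusedSectionVars false
variable (R : CRS n) {a b : EuclideanSpace ℝ (Fin n)} (hab : a ≠ b) (hΔ : R.Δ = {a, b})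
include hab hΔ

lemma coeff_sum_pos {β : EuclideanSpace ℝ (Fin n)} (hβ : β ∈ R.Pos) :
    1 ≤ R.coeff β a + R.coeff β b := by
  by_contra h
  have h1 : R.coeff β a = 0 ∧ R.coeff β b = 0 := by omega
  have h2 := coords R hab hΔ hβ
  rw [h1.1, h1.2] at h2
  simp at h2
  exact R.zero_notmem (h2 ▸ R.Pos_sub hβ)

lemma inj_phi : Set.InjOn (fun β => (R.coeff β a, R.coeff β b)) R.Pos := by
  intro β₁ h₁ β₂ h₂ he
  simp only [Prod.mk.injEq] at he
  rw [coords R hab hΔ h₁, coords R hab hΔ h₂, he.1, he.2]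

lemma up_core (S : Finset (ℕ × ℕ)) (h10 : (1,0) ∈ S) (h01 : (0,1) ∈ S)
    (hstep : ∀ β ∈ R.Pos, ∀ v ∈ S,
      ((R.coeff β a, R.coeff β b) = (v.1+1, v.2) ∨ (R.coeff β a, R.coeff β b) = (v.1, v.2+1)) →
      (R.coeff β a, R.coeff β b) ∈ S) :
    ∀ β ∈ R.Pos, (R.coeff β a, R.coeff β b) ∈ S := by
  have main : ∀ k (β : EuclideanSpace ℝ (Fin n)), β ∈ R.Pos →
      R.coeff β a + R.coeff β b = k → (R.coeff β a, R.coeff β b) ∈ S := by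
    intro k
    induction k using Nat.strong_induction_on with
    | _ k IH =>
      intro β hβ hk
      have h1 := coeff_sum_pos R hab hΔ hβ
      rcases Nat.lt_or_ge k 2 with hk2 | hk2
      · -- k = 1
        have : (R.coeff β a = 1 ∧ R.coeff β b = 0) ∨ (R.coeff β a = 0 ∧ R.coeff β b = 1) := by
          omega
        rcases this with ⟨e1, e2⟩ | ⟨e1, e2⟩ <;> rw [e1, e2] <;> assumption
      · rcases descent R hab hΔ hβ (by omega) with ⟨γ, hγ, e1, e2⟩ | ⟨γ, hγ, e1, e2⟩
        · have hγS := IH (k-1) (by omega) γ hγ (by omega)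
          exact hstep β hβ _ hγS (by left; rw [Prod.mk.injEq]; omega)
        · have hγS := IH (k-1) (by omega) γ hγ (by omega)
          exact hstep β hβ _ hγS (by right; rw [Prod.mk.injEq]; omega)
  exact fun β hβ => main _ β hβ rfl

end Five
end Aux

namespace Aux
variable {n : ℕ}
section Six
set_option linter.unusedSectionVars false
variable (R : CRS n) {a b : EuclideanSpace ℝ (Fin n)} (hab : a ≠ b) (hΔ : R.Δ = {a, b})
include hab hΔ

lemma pair_equiv {α : EuclideanSpace ℝ (Fin n)} (hα : α ∈ R.Pos)
    (hα5 : R.coeff α a + R.coeff α b ≤ 5)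
    (s : Finset (EuclideanSpace ℝ (Fin n))) (hs : s ⊆ R.Pos) (hcard : s.card = 2) :
    pairCond α s ↔ pairCondB (R.coeff α a, R.coeff α b)
      (s.image (fun β => (R.coeff β a, R.coeff β b))) := by
  constructor
  · rintro ⟨β₁, β₂, hne, hseq, m, k, hm, hk, hsum⟩
    have hβ₁s : β₁ ∈ s := by rw [hseq]; exact Finset.mem_insert_self _ _
    have hβ₂s : β₂ ∈ s := by rw [hseq]; exact Finset.mem_insert_of_mem (Finset.mem_singleton_self _)
    have hβ₁P : β₁ ∈ R.Pos := hs hβ₁s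
    have hβ₂P : β₂ ∈ R.Pos := hs hβ₂s
    have hcABα : α = ((m * R.coeff β₁ a + k * R.coeff β₂ a : ℕ) : ℝ) • a
        + ((m * R.coeff β₁ b + k * R.coeff β₂ b : ℕ) : ℝ) • b := by
      conv_lhs => rw [hsum, coords R hab hΔ hβ₁P, coords R hab hΔ hβ₂P]
      push_cast
      module
    have hu := uniq R hab hΔ ((coords R hab hΔ hα).symm.trans hcABα)
    have e1 : R.coeff α a = m * R.coeff β₁ a + k * R.coeff β₂ a := by exact_mod_cast hu.1
    have e2 : R.coeff α b = m * R.coeff β₁ b + k * R.coeff β₂ b := by exact_mod_cast hu.2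
    have hb1 := coeff_sum_pos R hab hΔ hβ₁P
    have hb2 := coeff_sum_pos R hab hΔ hβ₂P
    have hmle : m * (R.coeff β₁ a + R.coeff β₁ b) + k * (R.coeff β₂ a + R.coeff β₂ b) ≤ 5 := by
      calc m * (R.coeff β₁ a + R.coeff β₁ b) + k * (R.coeff β₂ a + R.coeff β₂ b)
          = (m * R.coeff β₁ a + k * R.coeff β₂ a) + (m * R.coeff β₁ b + k * R.coeff β₂ b) := by ring
        _ = R.coeff α a + R.coeff α b := by rw [e1, e2]
        _ ≤ 5 := hα5
    have hm6 : m < 6 := by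
      have h1 : m ≤ m * (R.coeff β₁ a + R.coeff β₁ b) := Nat.le_mul_of_pos_right m (by omega)
      omega
    have hk6 : k < 6 := by
      have h1 : k ≤ k * (R.coeff β₂ a + R.coeff β₂ b) := Nat.le_mul_of_pos_right k (by omega)
      omega
    refine ⟨(R.coeff β₁ a, R.coeff β₁ b), Finset.mem_image_of_mem _ hβ₁s,
      (R.coeff β₂ a, R.coeff β₂ b), Finset.mem_image_of_mem _ hβ₂s,
      fun h => hne (inj_phi R hab hΔ hβ₁P hβ₂P h),
      m, Finset.mem_range.2 hm6, k, Finset.mem_range.2 hk6, hm, hk, e1, e2⟩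
  · rintro ⟨w₁, hw₁, w₂, hw₂, hnew, m, hm6, k, hk6, hm, hk, e1, e2⟩
    obtain ⟨β₁, hβ₁s, hφ₁⟩ := Finset.mem_image.1 hw₁
    obtain ⟨β₂, hβ₂s, hφ₂⟩ := Finset.mem_image.1 hw₂
    have hβ₁P : β₁ ∈ R.Pos := hs hβ₁s
    have hβ₂P : β₂ ∈ R.Pos := hs hβ₂s
    have hne : β₁ ≠ β₂ := fun h => hnew (by rw [← hφ₁, ← hφ₂, h])
    have hseq : s = {β₁, β₂} := by
      refine (Finset.eq_of_subset_of_card_le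
        (Finset.insert_subset_iff.2 ⟨hβ₁s, Finset.singleton_subset_iff.2 hβ₂s⟩) ?_).symm
      rw [hcard, Finset.card_pair hne]
    have e1' : R.coeff α a = m * R.coeff β₁ a + k * R.coeff β₂ a := by
      rw [← hφ₁, ← hφ₂] at e1; exact e1
    have e2' : R.coeff α b = m * R.coeff β₁ b + k * R.coeff β₂ b := by
      rw [← hφ₁, ← hφ₂] at e2; exact e2
    refine ⟨β₁, β₂, hne, hseq, m, k, hm, hk, ?_⟩
    rw [coords R hab hΔ hα, coords R hab hΔ hβ₁P, coords R hab hΔ hβ₂P, e1', e2']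
    push_cast
    module

lemma conclude (S : Finset (ℕ × ℕ))
    (himg : R.Pos.image (fun β => (R.coeff β a, R.coeff β b)) = S)
    (hS5 : ∀ v ∈ S, v.1 + v.2 ≤ 5)
    (hcount : ∀ v ∈ S, v.1 + v.2 - 1 = ((S.powersetCard 2).filter (pairCondB v)).card)
    {α : EuclideanSpace ℝ (Fin n)} (hα : α ∈ R.Pos) :
    R.ht α - 1 = ((R.Pos.powersetCard 2).filter (pairCond α)).card := by
  have hφα : (R.coeff α a, R.coeff α b) ∈ S := himg ▸ Finset.mem_image_of_mem _ hα
  have hα5 : R.coeff α a + R.coeff α b ≤ 5 := hS5 _ hφα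
  rw [ht_eq R hab hΔ hα]
  rw [card_transfer (fun β => (R.coeff β a, R.coeff β b)) R.Pos (inj_phi R hab hΔ)
    (pairCond α) (pairCondB (R.coeff α a, R.coeff α b))
    (fun s hs hc => pair_equiv R hab hΔ hα hα5 s hs hc)]
  rw [himg]
  convert hcount _ hφα using 2
  exact Finset.filter_congr_decidable _ _ _

end Six
end Aux

namespace Aux
variable {n : ℕ}
section Cases
set_option linter.unusedSectionVars false
set_option maxHeartbeats 1000000
variable (R : CRS n) {a b : EuclideanSpace ℝ (Fin n)} (hab : a ≠ b) (hΔ : R.Δ = {a, b})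
include hab hΔ

lemma case00 (hp : 2*⟪a,b⟫ = -((0:ℕ):ℝ)*⟪a,a⟫) (hq : 2*⟪a,b⟫ = -((0:ℕ):ℝ)*⟪b,b⟫)
    {α : EuclideanSpace ℝ (Fin n)} (hα : α ∈ R.Pos) :
    R.ht α - 1 = ((R.Pos.powersetCard 2).filter (pairCond α)).card := by
  have haPos := haP R hab hΔ
  have hbPos := hbP R hab hΔ
  have haΦ := R.Pos_sub haPos
  have hbΦ := R.Pos_sub hbPos
  have hca := coeff_spec R hab hΔ haPos (x := 1) (y := 0) (by push_cast; module)
  have hcb := coeff_spec R hab hΔ hbPos (x := 0) (y := 1) (by push_cast; module)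
  have hstep : ∀ β ∈ R.Pos, ∀ v ∈ ({(1,0),(0,1)} : Finset (ℕ × ℕ)),
      ((R.coeff β a, R.coeff β b) = (v.1+1, v.2) ∨ (R.coeff β a, R.coeff β b) = (v.1, v.2+1)) →
      (R.coeff β a, R.coeff β b) ∈ ({(1,0),(0,1)} : Finset (ℕ × ℕ)) := by
    intro β hβ v hv hcand
    have hco := coords R hab hΔ hβ
    exfalso
    fin_cases hv <;> rcases hcand with hc | hc <;>
      simp only [Prod.mk.injEq] at hc <;> rw [hc.1, hc.2] at hco
    · -- (2,0)
      exact excl_smul R hab hΔ hβ haΦ (by norm_num) (by norm_num)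
        (show β = (2:ℝ) • a by rw [hco]; push_cast; module)
    · -- (1,1)
      exact excl_ba R hab hΔ hp hβ (x := 1) (by rw [hco]; push_cast; module) (by norm_num)
    · -- (1,1) again
      exact excl_ba R hab hΔ hp hβ (x := 1) (by rw [hco]; push_cast; module) (by norm_num)
    · -- (0,2)
      exact excl_smul R hab hΔ hβ hbΦ (by norm_num) (by norm_num)
        (show β = (2:ℝ) • b by rw [hco]; push_cast; module)
  have hup := up_core R hab hΔ _ (by decide) (by decide) hstep
  have himg : R.Pos.image (fun β => (R.coeff β a, R.coeff β b)) = ({(1,0),(0,1)} : Finset (ℕ × ℕ)) := by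
    apply Finset.Subset.antisymm
    · intro v hv
      obtain ⟨β, hβ, rfl⟩ := Finset.mem_image.1 hv
      exact hup β hβ
    · intro v hv
      fin_cases hv
      · exact Finset.mem_image.2 ⟨a, haPos, by rw [hca.1, hca.2]⟩
      · exact Finset.mem_image.2 ⟨b, hbPos, by rw [hcb.1, hcb.2]⟩
  exact conclude R hab hΔ _ himg (by decide) (by decide) hα

end Cases
end Aux

namespace Aux
variable {n : ℕ}
section Cases2
set_option linter.unusedSectionVars false
set_option maxHeartbeats 1000000
variable (R : CRS n) {a b : EuclideanSpace ℝ (Fin n)} (hab : a ≠ b) (hΔ : R.Δ = {a, b})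
include hab hΔ

lemma case11 (hp : 2*⟪a,b⟫ = -((1:ℕ):ℝ)*⟪a,a⟫) (hq : 2*⟪a,b⟫ = -((1:ℕ):ℝ)*⟪b,b⟫)
    {α : EuclideanSpace ℝ (Fin n)} (hα : α ∈ R.Pos) :
    R.ht α - 1 = ((R.Pos.powersetCard 2).filter (pairCond α)).card := by
  have haPos := haP R hab hΔ
  have hbPos := hbP R hab hΔ
  have haΦ := R.Pos_sub haPos
  have hbΦ := R.Pos_sub hbPos
  have hca := coeff_spec R hab hΔ haPos (x := 1) (y := 0) (by push_cast; module)
  have hcb := coeff_spec R hab hΔ hbPos (x := 0) (y := 1) (by push_cast; module)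
  have h11Φ : ((1:ℕ):ℝ) • a + ((1:ℕ):ℝ) • b ∈ R.Φ := by
    have h := reflA R hab hΔ hp hbΦ (x := 0) (y := 1) (by module)
    have e : (((1:ℕ):ℝ)*1 - 0) • a + (1:ℝ) • b = ((1:ℕ):ℝ) • a + ((1:ℕ):ℝ) • b := by
      push_cast; module
    rwa [e] at h
  have h11P := mem_pos_of R hab hΔ h11Φ rfl
  have hc11 := coeff_spec R hab hΔ h11P rfl
  have hstep : ∀ β ∈ R.Pos, ∀ v ∈ ({(1,0),(0,1),(1,1)} : Finset (ℕ × ℕ)),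
      ((R.coeff β a, R.coeff β b) = (v.1+1, v.2) ∨ (R.coeff β a, R.coeff β b) = (v.1, v.2+1)) →
      (R.coeff β a, R.coeff β b) ∈ ({(1,0),(0,1),(1,1)} : Finset (ℕ × ℕ)) := by
    intro β hβ v hv hcand
    have hco := coords R hab hΔ hβ
    fin_cases hv <;> rcases hcand with hc | hc <;> simp only [Prod.mk.injEq] at hc
    · exfalso; rw [hc.1, hc.2] at hco
      exact excl_smul R hab hΔ hβ haΦ (by norm_num) (by norm_num)
        (show β = (2:ℝ) • a by rw [hco]; push_cast; module)
    · rw [hc.1, hc.2]; decide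
    · rw [hc.1, hc.2]; decide
    · exfalso; rw [hc.1, hc.2] at hco
      exact excl_smul R hab hΔ hβ hbΦ (by norm_num) (by norm_num)
        (show β = (2:ℝ) • b by rw [hco]; push_cast; module)
    · exfalso; rw [hc.1, hc.2] at hco
      exact excl_ba R hab hΔ hp hβ (x := 2) (by rw [hco]; push_cast; module) (by norm_num)
    · exfalso; rw [hc.1, hc.2] at hco
      exact excl_ab R hab hΔ hq hβ (y := 2) (by rw [hco]; push_cast; module) (by norm_num)
  have hup := up_core R hab hΔ _ (by decide) (by decide) hstep
  have himg : R.Pos.image (fun β => (R.coeff β a, R.coeff β b))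
      = ({(1,0),(0,1),(1,1)} : Finset (ℕ × ℕ)) := by
    apply Finset.Subset.antisymm
    · intro v hv
      obtain ⟨β, hβ, rfl⟩ := Finset.mem_image.1 hv
      exact hup β hβ
    · intro v hv
      fin_cases hv
      · exact Finset.mem_image.2 ⟨a, haPos, by rw [hca.1, hca.2]⟩
      · exact Finset.mem_image.2 ⟨b, hbPos, by rw [hcb.1, hcb.2]⟩
      · exact Finset.mem_image.2 ⟨_, h11P, by rw [hc11.1, hc11.2]⟩
  exact conclude R hab hΔ _ himg (by decide) (by decide) hα

end Cases2
end Aux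

namespace Aux
variable {n : ℕ}
section Cases3
set_option linter.unusedSectionVars false
set_option maxHeartbeats 1000000
variable (R : CRS n) {a b : EuclideanSpace ℝ (Fin n)} (hab : a ≠ b) (hΔ : R.Δ = {a, b})
include hab hΔ

lemma case12 (hp : 2*⟪a,b⟫ = -((1:ℕ):ℝ)*⟪a,a⟫) (hq : 2*⟪a,b⟫ = -((2:ℕ):ℝ)*⟪b,b⟫)
    {α : EuclideanSpace ℝ (Fin n)} (hα : α ∈ R.Pos) :
    R.ht α - 1 = ((R.Pos.powersetCard 2).filter (pairCond α)).card := by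
  have haPos := haP R hab hΔ
  have hbPos := hbP R hab hΔ
  have haΦ := R.Pos_sub haPos
  have hbΦ := R.Pos_sub hbPos
  have hca := coeff_spec R hab hΔ haPos (x := 1) (y := 0) (by push_cast; module)
  have hcb := coeff_spec R hab hΔ hbPos (x := 0) (y := 1) (by push_cast; module)
  have h11Φ : ((1:ℕ):ℝ) • a + ((1:ℕ):ℝ) • b ∈ R.Φ := by
    have h := reflA R hab hΔ hp hbΦ (x := 0) (y := 1) (by module)
    have e : (((1:ℕ):ℝ)*1 - 0) • a + (1:ℝ) • b = ((1:ℕ):ℝ) • a + ((1:ℕ):ℝ) • b := by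
      push_cast; module
    rwa [e] at h
  have h11P := mem_pos_of R hab hΔ h11Φ rfl
  have hc11 := coeff_spec R hab hΔ h11P rfl
  have h12Φ : ((1:ℕ):ℝ) • a + ((2:ℕ):ℝ) • b ∈ R.Φ := by
    have h := reflB R hab hΔ hq haΦ (x := 1) (y := 0) (by module)
    have e : (1:ℝ) • a + (((2:ℕ):ℝ)*1 - 0) • b = ((1:ℕ):ℝ) • a + ((2:ℕ):ℝ) • b := by
      push_cast; module
    rwa [e] at h
  have h12P := mem_pos_of R hab hΔ h12Φ rfl
  have hc12 := coeff_spec R hab hΔ h12P rfl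
  have hstep : ∀ β ∈ R.Pos, ∀ v ∈ ({(1,0),(0,1),(1,1),(1,2)} : Finset (ℕ × ℕ)),
      ((R.coeff β a, R.coeff β b) = (v.1+1, v.2) ∨ (R.coeff β a, R.coeff β b) = (v.1, v.2+1)) →
      (R.coeff β a, R.coeff β b) ∈ ({(1,0),(0,1),(1,1),(1,2)} : Finset (ℕ × ℕ)) := by
    intro β hβ v hv hcand
    have hco := coords R hab hΔ hβ
    fin_cases hv <;> rcases hcand with hc | hc <;> simp only [Prod.mk.injEq] at hc
    · exfalso; rw [hc.1, hc.2] at hco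
      exact excl_smul R hab hΔ hβ haΦ (by norm_num) (by norm_num)
        (show β = (2:ℝ) • a by rw [hco]; push_cast; module)
    · rw [hc.1, hc.2]; decide
    · rw [hc.1, hc.2]; decide
    · exfalso; rw [hc.1, hc.2] at hco
      exact excl_smul R hab hΔ hβ hbΦ (by norm_num) (by norm_num)
        (show β = (2:ℝ) • b by rw [hco]; push_cast; module)
    · exfalso; rw [hc.1, hc.2] at hco
      exact excl_ba R hab hΔ hp hβ (x := 2) (by rw [hco]; push_cast; module) (by norm_num)
    · rw [hc.1, hc.2]; decide
    · exfalso; rw [hc.1, hc.2] at hco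
      exact excl_smul R hab hΔ hβ h11Φ (by norm_num) (by norm_num)
        (show β = (2:ℝ) • (((1:ℕ):ℝ) • a + ((1:ℕ):ℝ) • b) by rw [hco]; push_cast; module)
    · exfalso; rw [hc.1, hc.2] at hco
      exact excl_ab R hab hΔ hq hβ (y := 3) (by rw [hco]; push_cast; module) (by norm_num)
  have hup := up_core R hab hΔ _ (by decide) (by decide) hstep
  have himg : R.Pos.image (fun β => (R.coeff β a, R.coeff β b))
      = ({(1,0),(0,1),(1,1),(1,2)} : Finset (ℕ × ℕ)) := by
    apply Finset.Subset.antisymm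
    · intro v hv
      obtain ⟨β, hβ, rfl⟩ := Finset.mem_image.1 hv
      exact hup β hβ
    · intro v hv
      fin_cases hv
      · exact Finset.mem_image.2 ⟨a, haPos, by rw [hca.1, hca.2]⟩
      · exact Finset.mem_image.2 ⟨b, hbPos, by rw [hcb.1, hcb.2]⟩
      · exact Finset.mem_image.2 ⟨_, h11P, by rw [hc11.1, hc11.2]⟩
      · exact Finset.mem_image.2 ⟨_, h12P, by rw [hc12.1, hc12.2]⟩
  exact conclude R hab hΔ _ himg (by decide) (by decide) hα

lemma case13 (hp : 2*⟪a,b⟫ = -((1:ℕ):ℝ)*⟪a,a⟫) (hq : 2*⟪a,b⟫ = -((3:ℕ):ℝ)*⟪b,b⟫)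
    {α : EuclideanSpace ℝ (Fin n)} (hα : α ∈ R.Pos) :
    R.ht α - 1 = ((R.Pos.powersetCard 2).filter (pairCond α)).card := by
  have haPos := haP R hab hΔ
  have hbPos := hbP R hab hΔ
  have haΦ := R.Pos_sub haPos
  have hbΦ := R.Pos_sub hbPos
  have hca := coeff_spec R hab hΔ haPos (x := 1) (y := 0) (by push_cast; module)
  have hcb := coeff_spec R hab hΔ hbPos (x := 0) (y := 1) (by push_cast; module)
  have h11Φ : ((1:ℕ):ℝ) • a + ((1:ℕ):ℝ) • b ∈ R.Φ := by
    have h := reflA R hab hΔ hp hbΦ (x := 0) (y := 1) (by module)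
    have e : (((1:ℕ):ℝ)*1 - 0) • a + (1:ℝ) • b = ((1:ℕ):ℝ) • a + ((1:ℕ):ℝ) • b := by
      push_cast; module
    rwa [e] at h
  have h11P := mem_pos_of R hab hΔ h11Φ rfl
  have hc11 := coeff_spec R hab hΔ h11P rfl
  have h13Φ : ((1:ℕ):ℝ) • a + ((3:ℕ):ℝ) • b ∈ R.Φ := by
    have h := reflB R hab hΔ hq haΦ (x := 1) (y := 0) (by module)
    have e : (1:ℝ) • a + (((3:ℕ):ℝ)*1 - 0) • b = ((1:ℕ):ℝ) • a + ((3:ℕ):ℝ) • b := by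
      push_cast; module
    rwa [e] at h
  have h13P := mem_pos_of R hab hΔ h13Φ rfl
  have hc13 := coeff_spec R hab hΔ h13P rfl
  have h12Φ : ((1:ℕ):ℝ) • a + ((2:ℕ):ℝ) • b ∈ R.Φ := by
    have h := reflB R hab hΔ hq h11Φ (x := 1) (y := 1) (by push_cast; module)
    have e : (1:ℝ) • a + (((3:ℕ):ℝ)*1 - 1) • b = ((1:ℕ):ℝ) • a + ((2:ℕ):ℝ) • b := by
      push_cast; module
    rwa [e] at h
  have h12P := mem_pos_of R hab hΔ h12Φ rfl
  have hc12 := coeff_spec R hab hΔ h12P rfl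
  have h23Φ : ((2:ℕ):ℝ) • a + ((3:ℕ):ℝ) • b ∈ R.Φ := by
    have h := reflA R hab hΔ hp h13Φ (x := 1) (y := 3) (by push_cast; module)
    have e : (((1:ℕ):ℝ)*3 - 1) • a + (3:ℝ) • b = ((2:ℕ):ℝ) • a + ((3:ℕ):ℝ) • b := by
      push_cast; module
    rwa [e] at h
  have h23P := mem_pos_of R hab hΔ h23Φ rfl
  have hc23 := coeff_spec R hab hΔ h23P rfl
  have hstep : ∀ β ∈ R.Pos, ∀ v ∈ ({(1,0),(0,1),(1,1),(1,2),(1,3),(2,3)} : Finset (ℕ × ℕ)),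
      ((R.coeff β a, R.coeff β b) = (v.1+1, v.2) ∨ (R.coeff β a, R.coeff β b) = (v.1, v.2+1)) →
      (R.coeff β a, R.coeff β b) ∈ ({(1,0),(0,1),(1,1),(1,2),(1,3),(2,3)} : Finset (ℕ × ℕ)) := by
    intro β hβ v hv hcand
    have hco := coords R hab hΔ hβ
    fin_cases hv <;> rcases hcand with hc | hc <;> simp only [Prod.mk.injEq] at hc
    · exfalso; rw [hc.1, hc.2] at hco
      exact excl_smul R hab hΔ hβ haΦ (by norm_num) (by norm_num)
        (show β = (2:ℝ) • a by rw [hco]; push_cast; module)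
    · rw [hc.1, hc.2]; decide
    · rw [hc.1, hc.2]; decide
    · exfalso; rw [hc.1, hc.2] at hco
      exact excl_smul R hab hΔ hβ hbΦ (by norm_num) (by norm_num)
        (show β = (2:ℝ) • b by rw [hco]; push_cast; module)
    · exfalso; rw [hc.1, hc.2] at hco
      exact excl_ba R hab hΔ hp hβ (x := 2) (by rw [hco]; push_cast; module) (by norm_num)
    · rw [hc.1, hc.2]; decide
    · exfalso; rw [hc.1, hc.2] at hco
      exact excl_smul R hab hΔ hβ h11Φ (by norm_num) (by norm_num)
        (show β = (2:ℝ) • (((1:ℕ):ℝ) • a + ((1:ℕ):ℝ) • b) by rw [hco]; push_cast; module)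
    · rw [hc.1, hc.2]; decide
    · rw [hc.1, hc.2]; decide
    · exfalso; rw [hc.1, hc.2] at hco
      exact excl_ab R hab hΔ hq hβ (y := 4) (by rw [hco]; push_cast; module) (by norm_num)
    · exfalso; rw [hc.1, hc.2] at hco
      exact excl_smul R hab hΔ hβ h11Φ (by norm_num) (by norm_num)
        (show β = (3:ℝ) • (((1:ℕ):ℝ) • a + ((1:ℕ):ℝ) • b) by rw [hco]; push_cast; module)
    · exfalso; rw [hc.1, hc.2] at hco
      exact excl_smul R hab hΔ hβ h12Φ (by norm_num) (by norm_num)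
        (show β = (2:ℝ) • (((1:ℕ):ℝ) • a + ((2:ℕ):ℝ) • b) by rw [hco]; push_cast; module)
  have hup := up_core R hab hΔ _ (by decide) (by decide) hstep
  have himg : R.Pos.image (fun β => (R.coeff β a, R.coeff β b))
      = ({(1,0),(0,1),(1,1),(1,2),(1,3),(2,3)} : Finset (ℕ × ℕ)) := by
    apply Finset.Subset.antisymm
    · intro v hv
      obtain ⟨β, hβ, rfl⟩ := Finset.mem_image.1 hv
      exact hup β hβ
    · intro v hv
      fin_cases hv
      · exact Finset.mem_image.2 ⟨a, haPos, by rw [hca.1, hca.2]⟩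
      · exact Finset.mem_image.2 ⟨b, hbPos, by rw [hcb.1, hcb.2]⟩
      · exact Finset.mem_image.2 ⟨_, h11P, by rw [hc11.1, hc11.2]⟩
      · exact Finset.mem_image.2 ⟨_, h12P, by rw [hc12.1, hc12.2]⟩
      · exact Finset.mem_image.2 ⟨_, h13P, by rw [hc13.1, hc13.2]⟩
      · exact Finset.mem_image.2 ⟨_, h23P, by rw [hc23.1, hc23.2]⟩
  exact conclude R hab hΔ _ himg (by decide) (by decide) hα

end Cases3
end Aux

namespace Aux
variable {n : ℕ}
section Final
set_option linter.unusedSectionVars false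
set_option maxHeartbeats 1000000

lemma key (R : CRS n) {a b : EuclideanSpace ℝ (Fin n)} (hab : a ≠ b) (hΔ : R.Δ = {a, b})
    (p q : ℕ) (hp : 2*⟪a,b⟫ = -(p:ℝ)*⟪a,a⟫) (hq : 2*⟪a,b⟫ = -(q:ℝ)*⟪b,b⟫)
    (hq0 : p = 0 → q = 0) (hle : p ≤ q) (hpq3 : p*q ≤ 3)
    {α : EuclideanSpace ℝ (Fin n)} (hα : α ∈ R.Pos) :
    R.ht α - 1 = ((R.Pos.powersetCard 2).filter (pairCond α)).card := by
  have hcases : (p = 0 ∧ q = 0) ∨ (p = 1 ∧ q = 1) ∨ (p = 1 ∧ q = 2) ∨ (p = 1 ∧ q = 3) := by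
    by_cases hp0 : p = 0
    · exact Or.inl ⟨hp0, hq0 hp0⟩
    · have h1 : 1 ≤ p := Nat.pos_of_ne_zero hp0
      have h2 : p * p ≤ p * q := Nat.mul_le_mul_left p hle
      have hp1 : p = 1 := by nlinarith
      subst hp1
      have : q ≤ 3 := by omega
      omega
  rcases hcases with ⟨h1, h2⟩ | ⟨h1, h2⟩ | ⟨h1, h2⟩ | ⟨h1, h2⟩ <;> subst h1 <;> subst h2
  · exact case00 R hab hΔ hp hq hα
  · exact case11 R hab hΔ hp hq hα
  · exact case12 R hab hΔ hp hq hα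
  · exact case13 R hab hΔ hp hq hα

lemma final (R : CRS n) (hrk : R.Δ.card = 2)
    {α : EuclideanSpace ℝ (Fin n)} (hα : α ∈ R.Pos) :
    R.ht α - 1 = ((R.Pos.powersetCard 2).filter (pairCond α)).card := by
  obtain ⟨a, b, hab, hΔ⟩ := Finset.card_eq_two.1 hrk
  have haΦ := R.Pos_sub (haP R hab hΔ)
  have hbΦ := R.Pos_sub (hbP R hab hΔ)
  have hA : (0:ℝ) < ⟪a,a⟫ := inner_self_pos' R haΦ
  have hB : (0:ℝ) < ⟪b,b⟫ := inner_self_pos' R hbΦ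
  have hparba : ∀ c : ℝ, b ≠ c • a := by
    intro c hc
    have h0 : (-c) • a + (1:ℝ) • b = 0 := by rw [hc]; module
    have := (uniq0 R hab hΔ _ _ h0).2
    norm_num at this
  have hparab : ∀ c : ℝ, a ≠ c • b := by
    intro c hc
    have h0 : (1:ℝ) • a + (-c) • b = 0 := by rw [hc]; module
    have := (uniq0 R hab hΔ _ _ h0).1
    norm_num at this
  have hC : ⟪a,b⟫ ≤ 0 := by
    by_contra hcon
    push_neg at hcon
    exact sub_ba_not R hab hΔ (string R haΦ hbΦ hparba hcon)
  obtain ⟨z₁, hz₁⟩ := R.cartan_int a haΦ b hbΦ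
  obtain ⟨z₂, hz₂⟩ := R.cartan_int b hbΦ a haΦ
  rw [show ⟪b,a⟫ = ⟪a,b⟫ from real_inner_comm _ _] at hz₂
  have hz₁' : 2*⟪a,b⟫ = (z₁:ℝ) * ⟪a,a⟫ := by
    rw [div_eq_iff hA.ne'] at hz₁; exact hz₁
  have hz₂' : 2*⟪a,b⟫ = (z₂:ℝ) * ⟪b,b⟫ := by
    rw [div_eq_iff hB.ne'] at hz₂; exact hz₂
  have hz₁neg : z₁ ≤ 0 := by
    by_contra hcon
    push_neg at hcon
    have : (0:ℝ) < z₁ := by exact_mod_cast hcon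
    nlinarith
  have hz₂neg : z₂ ≤ 0 := by
    by_contra hcon
    push_neg at hcon
    have : (0:ℝ) < z₂ := by exact_mod_cast hcon
    nlinarith
  set p := (-z₁).toNat with hpdef
  set q := (-z₂).toNat with hqdef
  have hpz : (p:ℝ) = -(z₁:ℝ) := by
    have : ((-z₁).toNat : ℤ) = -z₁ := Int.toNat_of_nonneg (by omega)
    exact_mod_cast this
  have hqz : (q:ℝ) = -(z₂:ℝ) := by
    have : ((-z₂).toNat : ℤ) = -z₂ := Int.toNat_of_nonneg (by omega)
    exact_mod_cast this
  have hp : 2*⟪a,b⟫ = -(p:ℝ)*⟪a,a⟫ := by rw [hpz]; rw [hz₁']; ring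
  have hq : 2*⟪a,b⟫ = -(q:ℝ)*⟪b,b⟫ := by rw [hqz]; rw [hz₂']; ring
  have hcs : ⟪a,b⟫^2 < ⟪a,a⟫*⟪b,b⟫ :=
    cs_strict a b (fun h => R.zero_notmem (h ▸ hbΦ)) hparab
  have hpq3 : p * q ≤ 3 := by
    have h4 : ((p*q : ℕ) : ℝ) < 4 := by
      push_cast
      have e1 : (p:ℝ) * ⟪a,a⟫ = -(2*⟪a,b⟫) := by rw [hp]; ring
      have e2 : (q:ℝ) * ⟪b,b⟫ = -(2*⟪a,b⟫) := by rw [hq]; ring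
      have hppos : (0:ℝ) ≤ (p:ℝ) := Nat.cast_nonneg _
      have hqpos : (0:ℝ) ≤ (q:ℝ) := Nat.cast_nonneg _
      nlinarith
    have : (p*q : ℕ) < 4 := by exact_mod_cast h4
    omega
  have hpq0 : (p = 0 ↔ q = 0) := by
    constructor
    · intro h0
      have : (2:ℝ)*⟪a,b⟫ = 0 := by rw [hp, h0]; norm_num
      have hq0' : -(q:ℝ)*⟪b,b⟫ = 0 := by rw [← hq]; exact this
      have : (q:ℝ) = 0 := by
        rcases mul_eq_zero.1 hq0' with h | h
        · linarith [neg_eq_zero.1 h]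
        · linarith
      exact_mod_cast this
    · intro h0
      have : (2:ℝ)*⟪a,b⟫ = 0 := by rw [hq, h0]; norm_num
      have hp0' : -(p:ℝ)*⟪a,a⟫ = 0 := by rw [← hp]; exact this
      have : (p:ℝ) = 0 := by
        rcases mul_eq_zero.1 hp0' with h | h
        · linarith [neg_eq_zero.1 h]
        · linarith
      exact_mod_cast this
  rcases le_total p q with hle | hle
  · exact key R hab hΔ p q hp hq hpq0.1 hle hpq3 hα
  · have hΔ' : R.Δ = {b, a} := by rw [hΔ]; exact Finset.pair_comm a b
    have hp' : 2*⟪b,a⟫ = -(q:ℝ)*⟪b,b⟫ := by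
      rw [show ⟪b,a⟫ = ⟪a,b⟫ from real_inner_comm _ _]; exact hq
    have hq' : 2*⟪b,a⟫ = -(p:ℝ)*⟪a,a⟫ := by
      rw [show ⟪b,a⟫ = ⟪a,b⟫ from real_inner_comm _ _]; exact hp
    exact key R hab.symm hΔ' q p hp' hq' hpq0.2 hle (by rwa [Nat.mul_comm] at hpq3) hα

end Final
end Aux

/-- in a rank-2 crystallographic root system, `ht(α) - 1` equals
the number of unordered pairs `{β₁, β₂}` of distinct positive roots with
`α ∈ ℤ_{>0}·β₁ + ℤ_{>0}·β₂`. -/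
theorem height_sub_one_eq_card_pairs_rank_two {n : ℕ} (R : CRS n)
    (hrk : R.Δ.card = 2)
    (α : EuclideanSpace ℝ (Fin n)) (hα : α ∈ R.Pos) :
    R.ht α - 1 = ((R.Pos.powersetCard 2).filter (pairCond α)).card :=
  Aux.final R hrk hα
end

section
/- Let I be an ideal in the poset of positive roots of a crystallographic root system Φ, and let X be a subspace of V with Φ_X = Φ ∩ X^⊥. Then I ∩ Φ_X⁺ is an ideal in the poset of positive roots of Φ_X. -/
open Finset Submodule
open scoped Classical

/-- The order on a positive system `P`: `γ ≤ δ` iff `δ - γ` is a nonnegative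
integer combination of the simple system of `P`. -/
def leIn {n : ℕ} (P : Finset (EuclideanSpace ℝ (Fin n)))
    (γ δ : EuclideanSpace ℝ (Fin n)) : Prop :=
  ∃ c : EuclideanSpace ℝ (Fin n) → ℕ, δ - γ = ∑ s ∈ simpleOf P, (c s : ℝ) • s

theorem simpleOf_subset {n : ℕ} (P : Finset (EuclideanSpace ℝ (Fin n))) : simpleOf P ⊆ P :=
  Finset.filter_subset _ _

namespace CRS

variable {n : ℕ} (R : CRS n)

theorem exists_sum_simple_eq_sum_pos {s : Finset (EuclideanSpace ℝ (Fin n))}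
    (hs : s ⊆ R.Pos) (c : EuclideanSpace ℝ (Fin n) → ℕ) :
    ∃ d : EuclideanSpace ℝ (Fin n) → ℕ,
      ∑ x ∈ s, (c x : ℝ) • x = ∑ a ∈ R.Δ, (d a : ℝ) • a := by
  refine ⟨fun a => ∑ x ∈ s, c x * R.coeff x a, ?_⟩
  calc ∑ x ∈ s, (c x : ℝ) • x
      = ∑ x ∈ s, ∑ a ∈ R.Δ, ((c x * R.coeff x a : ℕ) : ℝ) • a := by
        refine Finset.sum_congr rfl fun x hx => ?_
        simp only [Nat.cast_mul, mul_smul, ← Finset.smul_sum, ← R.pos_eq_sum x (hs hx)]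
    _ = ∑ a ∈ R.Δ, ((∑ x ∈ s, c x * R.coeff x a : ℕ) : ℝ) • a := by
        rw [Finset.sum_comm]
        simp only [Nat.cast_sum, Finset.sum_smul]

theorem rle_of_leIn {P : Finset (EuclideanSpace ℝ (Fin n))} (hP : P ⊆ R.Pos)
    {γ δ : EuclideanSpace ℝ (Fin n)} (h : leIn P γ δ) : R.rle γ δ := by
  obtain ⟨c, hc⟩ := h
  obtain ⟨d, hd⟩ := R.exists_sum_simple_eq_sum_pos ((simpleOf_subset P).trans hP) c
  exact ⟨d, hc.trans hd⟩

theorem posIn_subset_pos (X : Submodule ℝ (EuclideanSpace ℝ (Fin n))) :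
    R.PosIn X ⊆ R.Pos :=
  Finset.filter_subset _ _

end CRS

/-- if `I` is an ideal of `Φ⁺` and `X` a subspace, then
`I ∩ Φ_X⁺` is an ideal in the positive root poset of `Φ_X = Φ ∩ X^⊥`. -/
theorem ideal_inter_localization_isIdeal {n : ℕ} (R : CRS n)
    (I : Finset (EuclideanSpace ℝ (Fin n))) (hI : R.IsIdeal I)
    (X : Submodule ℝ (EuclideanSpace ℝ (Fin n))) :
    ∀ δ ∈ I ∩ R.PosIn X, ∀ γ ∈ R.PosIn X, leIn (R.PosIn X) γ δ →
      γ ∈ I ∩ R.PosIn X := by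
  intro δ hδ γ hγ hle
  have hrle : R.rle γ δ := R.rle_of_leIn (R.posIn_subset_pos X) hle
  exact Finset.mem_inter.2
    ⟨hI.2 δ (Finset.mem_inter.1 hδ).1 γ (R.posIn_subset_pos X hγ) hrle, hγ⟩
end
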